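/- Let p ≥ 1, let f_m : ℝ^p → ℝ be differentiable with ∇f_m L_m-Lipschitz in the Euclidean norm, let τ > 0, and let θ, θ' ∈ ℝ^p. Let Q, Q̂ ∈ ℝ^p, set ε = ∇f_m(θ) - Q, and let ε' ∈ ℝ^p satisfy ‖ε'‖_∞ ≤ τ·‖∇f_m(θ') - Q̂‖_∞. Then ‖ε'‖_∞² ≤ 3τ²·L_m²·‖θ' - θ‖₂² + 3τ²·‖ε‖_∞² + 3τ²·‖Q - Q̂‖₂². -/
import Mathlib


/-- The ℓ∞ norm on `ℝ^p`: `‖x‖_∞ = max_i |x_i|`. -/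
noncomputable def linf {p : ℕ} (x : EuclideanSpace ℝ (Fin p)) : ℝ :=
  ‖(WithLp.equiv 2 (Fin p → ℝ)) x‖

lemma linf_nonneg {p : ℕ} (x : EuclideanSpace ℝ (Fin p)) : 0 ≤ linf x :=
  norm_nonneg _

lemma linf_add {p : ℕ} (x y : EuclideanSpace ℝ (Fin p)) :
    linf (x + y) ≤ linf x + linf y := by
  simpa [linf] using norm_add_le ((WithLp.equiv 2 (Fin p → ℝ)) x)
    ((WithLp.equiv 2 (Fin p → ℝ)) y)

lemma linf_le_norm {p : ℕ} (x : EuclideanSpace ℝ (Fin p)) : linf x ≤ ‖x‖ := by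
  rw [linf]
  apply (pi_norm_le_iff_of_nonneg (norm_nonneg x)).2
  intro i
  have h1 : ∑ j, x j ^ 2 ≤ ‖x‖ ^ 2 := by
    rw [EuclideanSpace.norm_eq, Real.sq_sqrt (by positivity)]
    simp [Real.norm_eq_abs, sq_abs]
  have h2 : (x i) ^ 2 ≤ ‖x‖ ^ 2 :=
    le_trans (Finset.single_le_sum (f := fun j => x j ^ 2)
      (fun j _ => sq_nonneg (x j)) (Finset.mem_univ i)) h1
  have h3 : |x i| ≤ ‖x‖ := by
    nlinarith [abs_nonneg (x i), norm_nonneg x, sq_abs (x i)]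
  simpa [Real.norm_eq_abs] using h3

set_option maxHeartbeats 1000000 in
/-- **One-step quantization-error recursion** (alternative proof of Theorem 1 in the
supplementary material). If `∇f_m` is `L_m`-Lipschitz, `ε = ∇f_m(θ) - Q`, and
`‖ε'‖_∞ ≤ τ‖∇f_m(θ') - Q̂‖_∞`, then
`‖ε'‖_∞² ≤ 3τ²L_m²‖θ' - θ‖₂² + 3τ²‖ε‖_∞² + 3τ²‖Q - Q̂‖₂²`. -/
theorem quantization_error_recursion (p : ℕ) (hp : 1 ≤ p)
    (fm : EuclideanSpace ℝ (Fin p) → ℝ)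
    (fm' : EuclideanSpace ℝ (Fin p) → EuclideanSpace ℝ (Fin p))
    (hgradm : ∀ x, HasGradientAt fm (fm' x) x)
    (Lm : ℝ) (hlipm : ∀ x y, ‖fm' x - fm' y‖ ≤ Lm * ‖x - y‖)
    (τ : ℝ) (hτ : 0 < τ)
    (θ θ' Q Qhat ε' : EuclideanSpace ℝ (Fin p))
    (ε : EuclideanSpace ℝ (Fin p)) (hε : ε = fm' θ - Q)
    (hε' : linf ε' ≤ τ * linf (fm' θ' - Qhat)) :
    linf ε' ^ 2 ≤ 3 * τ ^ 2 * Lm ^ 2 * ‖θ' - θ‖ ^ 2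
      + 3 * τ ^ 2 * linf ε ^ 2 + 3 * τ ^ 2 * ‖Q - Qhat‖ ^ 2 := by
  have hdecomp : fm' θ' - Qhat = (fm' θ' - fm' θ) + ε + (Q - Qhat) := by
    rw [hε, sub_add_sub_cancel, sub_add_sub_cancel]
  set a := linf (fm' θ' - fm' θ)
  set b := linf ε
  set c := linf (Q - Qhat)
  have htri : linf (fm' θ' - Qhat) ≤ a + b + c := by
    rw [hdecomp]
    calc linf ((fm' θ' - fm' θ) + ε + (Q - Qhat))
        ≤ linf ((fm' θ' - fm' θ) + ε) + c := linf_add _ _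
      _ ≤ a + b + c := by linarith [linf_add (fm' θ' - fm' θ) ε]
  have ha : a ≤ Lm * ‖θ' - θ‖ :=
    le_trans (linf_le_norm _) (hlipm θ' θ)
  have hc : c ≤ ‖Q - Qhat‖ := linf_le_norm _
  have h1 : linf ε' ≤ τ * (a + b + c) :=
    le_trans hε' (by nlinarith)
  have h0 : 0 ≤ linf ε' := linf_nonneg _
  have ha0 : 0 ≤ a := linf_nonneg _
  have hb0 : 0 ≤ b := linf_nonneg _
  have hc0 : 0 ≤ c := linf_nonneg _
  have h2 : linf ε' ^ 2 ≤ τ ^ 2 * (a + b + c) ^ 2 := by nlinarith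
  have h3 : (a + b + c) ^ 2 ≤ 3 * (a ^ 2 + b ^ 2 + c ^ 2) := by nlinarith [sq_nonneg (a - b), sq_nonneg (b - c), sq_nonneg (a - c)]
  have ha2 : a ^ 2 ≤ Lm ^ 2 * ‖θ' - θ‖ ^ 2 := by nlinarith
  have hc2 : c ^ 2 ≤ ‖Q - Qhat‖ ^ 2 := by nlinarith
  nlinarith [sq_nonneg τ, mul_pos hτ hτ]
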